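/- arXiv:1205.1132 — 4 statements merged into one kernel-verified Lean document; each statement's English description precedes it below -/
import Mathlib

section
/- For a symmetric n×n real matrix A with S₂(A) = 0, the Newton tensor G(A) = S₁(A)·I − A is positive definite or negative definite if and only if S₃(A) ≠ 0. -/
/-! With `S₂ = 0` the Newton identities give `∑ λᵢ² = S₁²` and `3 S₃ = ∑ λᵢ² (λᵢ - S₁)`.
If all `S₁ - λᵢ` have the same strict sign, `S₃ = 0` would force every `λᵢ = 0`, hence `S₁ = 0`.
Conversely `λᵢ² ≤ S₁²` gives `|λᵢ| ≤ |S₁|`, and the boundary case `λᵢ = S₁` is excluded because it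
forces all other eigenvalues to vanish, and then `S₃ = 0`. -/

open Finset

noncomputable def esym2 {n : ℕ} (l : Fin n → ℝ) : ℝ :=
  ∑ i, ∑ j ∈ univ.filter (fun j => i < j), l i * l j

noncomputable def esym3 {n : ℕ} (l : Fin n → ℝ) : ℝ :=
  ∑ i, ∑ j ∈ univ.filter (fun j => i < j),
    ∑ k ∈ univ.filter (fun k => j < k), l i * l j * l k

/-- The first Newton tensor `G(A) = S₁(A)·I − A`. -/
noncomputable def newton1 {n : ℕ} (A : Matrix (Fin n) (Fin n) ℝ) : Matrix (Fin n) (Fin n) ℝ :=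
  A.trace • (1 : Matrix (Fin n) (Fin n) ℝ) - A

section ElementarySymmetric

variable {n : ℕ}

lemma esym2_castSucc (l : Fin (n + 1) → ℝ) :
    esym2 l = esym2 (l ∘ Fin.castSucc) + (∑ i : Fin n, l i.castSucc) * l (Fin.last n) := by
  simp only [esym2, sum_filter, Fin.sum_univ_castSucc, Function.comp_apply,
    Fin.castSucc_lt_castSucc_iff, Fin.castSucc_lt_last, (Fin.le_last _).not_gt, if_true, if_false,
    sum_const_zero, add_zero, sum_add_distrib, sum_mul]

lemma esym3_castSucc (l : Fin (n + 1) → ℝ) :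
    esym3 l = esym3 (l ∘ Fin.castSucc) + esym2 (l ∘ Fin.castSucc) * l (Fin.last n) := by
  simp only [esym3, esym2, sum_filter, Fin.sum_univ_castSucc, Function.comp_apply,
    Fin.castSucc_lt_castSucc_iff, Fin.castSucc_lt_last, (Fin.le_last _).not_gt, if_true, if_false,
    sum_const_zero, add_zero, sum_add_distrib, sum_mul, ite_mul, zero_mul]

lemma sq_sum_eq_sum_sq_add_esym2 (l : Fin n → ℝ) :
    (∑ i, l i) ^ 2 = ∑ i, l i ^ 2 + 2 * esym2 l := by
  induction n with
  | zero => simp [esym2]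
  | succ m ih =>
    have ih' := ih (l ∘ Fin.castSucc)
    simp only [Function.comp_apply] at ih'
    rw [esym2_castSucc, Fin.sum_univ_castSucc, Fin.sum_univ_castSucc]
    linear_combination ih'

lemma cube_sum_eq_esym3_add (l : Fin n → ℝ) :
    (∑ i, l i) ^ 3 = 6 * esym3 l + 3 * (∑ i, l i) * (∑ i, l i ^ 2) - 2 * ∑ i, l i ^ 3 := by
  induction n with
  | zero => simp [esym3]
  | succ m ih =>
    have ih' := ih (l ∘ Fin.castSucc)
    have hsq := sq_sum_eq_sum_sq_add_esym2 (l ∘ Fin.castSucc)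
    simp only [Function.comp_apply] at ih' hsq
    rw [esym3_castSucc, Fin.sum_univ_castSucc, Fin.sum_univ_castSucc, Fin.sum_univ_castSucc]
    linear_combination ih' + 3 * l (Fin.last m) * hsq

lemma esym2_neg (l : Fin n → ℝ) : esym2 (-l) = esym2 l := by
  simp [esym2]

lemma esym3_neg (l : Fin n → ℝ) : esym3 (-l) = -esym3 l := by
  simp [esym3, sum_neg_distrib]

end ElementarySymmetric

section Esym2EqZero

variable {n : ℕ} {l : Fin n → ℝ}

lemma sum_sq_eq_sq_sum (h2 : esym2 l = 0) : ∑ i, l i ^ 2 = (∑ i, l i) ^ 2 := by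
  rw [sq_sum_eq_sum_sq_add_esym2, h2, mul_zero, add_zero]

lemma three_mul_esym3_eq (h2 : esym2 l = 0) :
    3 * esym3 l = ∑ i, l i ^ 2 * (l i - ∑ j, l j) := by
  have hcube := cube_sum_eq_esym3_add l
  rw [sum_sq_eq_sq_sum h2] at hcube
  simp only [mul_sub, sum_sub_distrib, ← sum_mul, sum_sq_eq_sq_sum h2, ← pow_succ]
  linear_combination -hcube / 2

lemma esym3_eq_zero_of_eq_sum (h2 : esym2 l = 0) {i : Fin n} (hi : l i = ∑ j, l j) :
    esym3 l = 0 := by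
  have hrest : ∑ j ∈ univ.erase i, l j ^ 2 = 0 := by
    have := add_sum_erase univ (fun j => l j ^ 2) (mem_univ i)
    rw [sum_sq_eq_sq_sum h2, ← hi] at this
    linarith
  have hzero : ∀ j, j ≠ i → l j = 0 := fun j hj =>
    pow_eq_zero_iff two_ne_zero |>.1 <|
      (sum_eq_zero_iff_of_nonneg fun k _ => sq_nonneg (l k)).1 hrest j (mem_erase.2 ⟨hj, mem_univ j⟩)
  have hterms : ∑ j, l j ^ 2 * (l j - ∑ k, l k) = 0 := sum_eq_zero fun j _ => by
    rcases eq_or_ne j i with rfl | hj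
    · rw [hi, sub_self, mul_zero]
    · rw [hzero j hj]; ring
  linarith [three_mul_esym3_eq h2]

lemma esym3_ne_zero_of_lt_sum (hn : n ≠ 0) (h2 : esym2 l = 0) (h : ∀ i, l i < ∑ j, l j) :
    esym3 l ≠ 0 := by
  intro h3
  have hterms : ∑ i, l i ^ 2 * (l i - ∑ j, l j) = 0 := by rw [← three_mul_esym3_eq h2, h3, mul_zero]
  have hzero : ∀ i, l i = 0 := fun i => by
    have := (sum_eq_zero_iff_of_nonpos fun k _ =>
      mul_nonpos_of_nonneg_of_nonpos (sq_nonneg (l k)) (sub_neg.2 (h k)).le).1 hterms i (mem_univ i)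
    exact pow_eq_zero_iff two_ne_zero |>.1 <|
      (mul_eq_zero.1 this).resolve_right (sub_neg.2 (h i)).ne
  have := h ⟨0, Nat.pos_of_ne_zero hn⟩
  simp [hzero] at this

lemma esym3_ne_zero_of_sum_lt (hn : n ≠ 0) (h2 : esym2 l = 0) (h : ∀ i, ∑ j, l j < l i) :
    esym3 l ≠ 0 := by
  have := esym3_ne_zero_of_lt_sum hn ((esym2_neg l).trans h2) fun i => by
    simpa [sum_neg_distrib] using h i
  rwa [esym3_neg, neg_ne_zero] at this

lemma lt_sum_or_sum_lt_of_esym3_ne_zero (hn : n ≠ 0) (h2 : esym2 l = 0) (h3 : esym3 l ≠ 0) :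
    (∀ i, l i < ∑ j, l j) ∨ (∀ i, ∑ j, l j < l i) := by
  set T := ∑ j, l j
  have hne : ∀ i, l i ≠ T := fun i hi => h3 (esym3_eq_zero_of_eq_sum h2 hi)
  have habs : ∀ i, |l i| ≤ |T| := fun i => sq_le_sq.1 <| by
    rw [← sum_sq_eq_sq_sum h2]
    exact single_le_sum (fun j _ => sq_nonneg (l j)) (mem_univ i)
  rcases lt_trichotomy T 0 with hT | hT | hT
  · right
    intro i
    have := (abs_le.1 (habs i)).1
    rw [abs_of_neg hT, neg_neg] at this
    exact this.lt_of_ne (hne i).symm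
  · have i : Fin n := ⟨0, Nat.pos_of_ne_zero hn⟩
    have hi := habs i
    rw [hT, abs_zero, abs_nonpos_iff] at hi
    exact absurd (hi.trans hT.symm) (hne i)
  · left
    intro i
    have := (abs_le.1 (habs i)).2
    rw [abs_of_pos hT] at this
    exact this.lt_of_ne (hne i)

lemma lt_sum_or_sum_lt_iff_esym3_ne_zero (hn : n ≠ 0) (h2 : esym2 l = 0) :
    ((∀ i, l i < ∑ j, l j) ∨ (∀ i, ∑ j, l j < l i)) ↔ esym3 l ≠ 0 :=
  ⟨fun h => h.elim (esym3_ne_zero_of_lt_sum hn h2) (esym3_ne_zero_of_sum_lt hn h2),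
    lt_sum_or_sum_lt_of_esym3_ne_zero hn h2⟩

end Esym2EqZero

open scoped ComplexOrder

namespace Matrix.IsHermitian

variable {𝕜 n : Type*} [RCLike 𝕜] [Fintype n] [DecidableEq n] {A : Matrix n n 𝕜}

lemma sub_smul_one_eq_conj (hA : A.IsHermitian) (c : ℝ) :
    A - c • (1 : Matrix n n 𝕜) = Unitary.conjStarAlgAut 𝕜 _ hA.eigenvectorUnitary
      (diagonal fun i => ((hA.eigenvalues i - c : ℝ) : 𝕜)) := by
  have hD : diagonal (fun i => ((hA.eigenvalues i - c : ℝ) : 𝕜)) =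
      diagonal (RCLike.ofReal ∘ hA.eigenvalues) - (c : 𝕜) • 1 := by
    rw [smul_one_eq_diagonal, diagonal_sub]
    simp
  conv_lhs => rw [hA.spectral_theorem, RCLike.real_smul_eq_coe_smul (K := 𝕜)]
  rw [hD, map_sub, map_smul, map_one]

lemma posDef_sub_smul_one_iff (hA : A.IsHermitian) (c : ℝ) :
    (A - c • (1 : Matrix n n 𝕜)).PosDef ↔ ∀ i, c < hA.eigenvalues i := by
  rw [hA.sub_smul_one_eq_conj, Unitary.conjStarAlgAut_apply,
    IsUnit.posDef_star_right_conjugate_iff Unitary.isUnit_coe, posDef_diagonal_iff]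
  simp

lemma posDef_smul_one_sub_iff (hA : A.IsHermitian) (c : ℝ) :
    (c • (1 : Matrix n n 𝕜) - A).PosDef ↔ ∀ i, hA.eigenvalues i < c := by
  rw [← neg_sub, hA.sub_smul_one_eq_conj, ← map_neg, Unitary.conjStarAlgAut_apply,
    IsUnit.posDef_star_right_conjugate_iff Unitary.isUnit_coe, diagonal_neg, posDef_diagonal_iff]
  simp

end Matrix.IsHermitian

/-- For a real symmetric `n×n` matrix `A` (`n ≥ 3`) with `S₂(A) = 0`,
the Newton tensor `G(A)` is positive definite or negative definite
if and only if `S₃(A) ≠ 0`. -/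
theorem newton1_definite_iff_S3_ne_zero {n : ℕ} (hn : 3 ≤ n)
    (A : Matrix (Fin n) (Fin n) ℝ) (hA : A.IsHermitian)
    (hS2 : esym2 hA.eigenvalues = 0) :
    ((newton1 A).PosDef ∨ (-(newton1 A)).PosDef) ↔ esym3 hA.eigenvalues ≠ 0 := by
  have htrace : A.trace = ∑ i, hA.eigenvalues i := by simpa using hA.trace_eq_sum_eigenvalues
  rw [newton1, neg_sub, htrace, hA.posDef_smul_one_sub_iff, hA.posDef_sub_smul_one_iff]
  exact lt_sum_or_sum_lt_iff_esym3_ne_zero (by omega) hS2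
end

section
/- Let λ₁,…,λₙ be real numbers with Σ_{i<j} λᵢλⱼ = 0 and Σ_{i<j<k} λᵢλⱼλ_k ≠ 0. Then for every index i, Σ_{j≠i} λⱼ ≠ 0; moreover all the numbers Σ_{j≠i} λⱼ (i = 1,…,n) have the same sign. -/
/-!
Put `s = ∑ λⱼ`. Since `σ₂ = 0`, `s² = ∑ λⱼ²`; since `σ₃ ≠ 0`, every `λᵢ` has a nonzero
companion `λⱼ` (`j ≠ i`), so `λᵢ² < s²` and hence `s * (s - λᵢ) > 0`. Thus every
`∑_{j≠i} λⱼ = s - λᵢ` has the sign of `s`.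
-/

open Finset

section
variable {ι R : Type*} [Fintype ι] [LinearOrder ι]

theorem sq_sum_eq_sum_sq_add_two_mul_sum_lt [CommSemiring R] (f : ι → R) :
    (∑ i, f i) ^ 2 = ∑ i, f i ^ 2 + 2 * ∑ i, ∑ j ∈ univ.filter (fun j => i < j), f i * f j := by
  have split : ∀ i j, f i * f j = (if i < j then f i * f j else 0)
      + (if j < i then f j * f i else 0) + (if i = j then f i ^ 2 else 0) := by
    intro i j
    rcases lt_trichotomy i j with h | rfl | h
    · simp [h, h.not_gt, h.ne]
    · simp [sq]
    · simp [h, h.not_gt, h.ne', mul_comm]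
  rw [sq, sum_mul_sum, sum_congr rfl fun i _ => sum_congr rfl fun j _ => split i j]
  simp only [sum_add_distrib]
  rw [sum_comm (f := fun i j => if j < i then f j * f i else 0)]
  simp only [sum_ite_eq, mem_univ, if_true, ← sum_filter]
  ring

theorem exists_ne_ne_zero_of_sum_triple_ne_zero [NonUnitalNonAssocSemiring R] {f : ι → R}
    (h : ∑ a, ∑ b ∈ univ.filter (fun b => a < b),
        ∑ c ∈ univ.filter (fun c => b < c), f a * f b * f c ≠ 0) (i : ι) :
    ∃ j ≠ i, f j ≠ 0 := by
  contrapose! h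
  refine sum_eq_zero fun a _ => sum_eq_zero fun b hb => sum_eq_zero fun c _ => ?_
  rcases eq_or_ne a i with rfl | ha
  · rw [h b (mem_filter.mp hb).2.ne', mul_zero, zero_mul]
  · rw [h a ha, zero_mul, zero_mul]

omit [LinearOrder ι] in
theorem sq_lt_sum_sq_of_ne_of_ne_zero [Ring R] [LinearOrder R] [IsStrictOrderedRing R]
    {f : ι → R} {i j : ι} (hji : j ≠ i) (hj : f j ≠ 0) : f i ^ 2 < ∑ k, f k ^ 2 :=
  single_lt_sum hji (mem_univ i) (mem_univ j) (by positivity) fun k _ _ => sq_nonneg (f k)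

end

section
variable {R : Type*} [CommRing R] [LinearOrder R] [IsStrictOrderedRing R] {a b c : R}

theorem mul_sub_pos_of_sq_lt_sq (h : a ^ 2 < b ^ 2) : 0 < b * (b - a) := by
  nlinarith [sq_nonneg (b - a)]

theorem mul_pos_of_mul_pos_of_mul_pos (hb : 0 < a * b) (hc : 0 < a * c) : 0 < b * c :=
  pos_of_mul_pos_right (a := a ^ 2) (by linear_combination mul_pos hb hc) (sq_nonneg a)

end

theorem newton_eigenvalues_same_sign_general {n : ℕ} (l : Fin n → ℝ)
    (hS2 : ∑ i, ∑ j ∈ univ.filter (fun j => i < j), l i * l j = 0)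
    (hS3 : ∑ i, ∑ j ∈ univ.filter (fun j => i < j),
        ∑ k ∈ univ.filter (fun k => j < k), l i * l j * l k ≠ 0) :
    (∀ i, ∑ j ∈ univ.erase i, l j ≠ 0) ∧
    (∀ i i', 0 < (∑ j ∈ univ.erase i, l j) * (∑ j ∈ univ.erase i', l j)) := by
  set s := ∑ j, l j
  have hsq : s ^ 2 = ∑ j, l j ^ 2 := by
    rw [sq_sum_eq_sum_sq_add_two_mul_sum_lt, hS2, mul_zero, add_zero]
  have hpos : ∀ i, 0 < s * ∑ j ∈ univ.erase i, l j := by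
    intro i
    obtain ⟨j, hji, hj⟩ := exists_ne_ne_zero_of_sum_triple_ne_zero hS3 i
    rw [sum_erase_eq_sub (mem_univ i)]
    exact mul_sub_pos_of_sq_lt_sq (hsq ▸ sq_lt_sum_sq_of_ne_of_ne_zero hji hj)
  exact ⟨fun i => right_ne_zero_of_mul (hpos i).ne',
    fun i i' => mul_pos_of_mul_pos_of_mul_pos (hpos i) (hpos i')⟩

/-- Let `λ₁,…,λₙ` (`n ≥ 3`) be reals with `∑_{i<j} λᵢλⱼ = 0` and
`∑_{i<j<k} λᵢλⱼλₖ ≠ 0`. Then for every `i` the sum `∑_{j≠i} λⱼ` is nonzero,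
and all these sums have the same sign. -/
theorem newton_eigenvalues_same_sign {n : ℕ} (hn : 3 ≤ n) (l : Fin n → ℝ)
    (hS2 : ∑ i, ∑ j ∈ univ.filter (fun j => i < j), l i * l j = 0)
    (hS3 : ∑ i, ∑ j ∈ univ.filter (fun j => i < j),
        ∑ k ∈ univ.filter (fun k => j < k), l i * l j * l k ≠ 0) :
    (∀ i, ∑ j ∈ univ.erase i, l j ≠ 0) ∧
    (∀ i i', 0 < (∑ j ∈ univ.erase i, l j) * (∑ j ∈ univ.erase i', l j)) :=
  newton_eigenvalues_same_sign_general l hS2 hS3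
end

section
/- For n = 4 and m > 0, u_m(r) = ∫_{r_m}^r √(2m/(s² − 2m)) ds satisfies u_m(r) = √(2m)·log r + a₁ + O(r^{−2}) as r → ∞, for some constant a₁, with leading coefficient a = √(2m) ≠ 0. -/
/-!
The integrand is the derivative of `√b · arcosh (s / √b)` with `b = 2m`, so
`u_m(r) = √(2m) · arcosh (r / √(2m))`; being a nonnegative derivative, it is integrable up to the
singular endpoint `√b`. The expansion then comes from `arcosh x = log (2x) + O(x⁻²)`: with
`w = √(x² - 1)` one has `(x - w)(x + w) = 1`, hence
`0 ≤ log (2x) - arcosh x = log (2x / (x + w)) ≤ (x - w) / (x + w) = (x + w)⁻² ≤ x⁻²`.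
-/

open Filter Asymptotics MeasureTheory

namespace Real

theorem hasDerivAt_sqrt_mul_arcosh_div {b s : ℝ} (hb : 0 < b) (hs : √b < s) :
    HasDerivAt (fun t => √b * arcosh (t / √b)) (√(b / (s ^ 2 - b))) s := by
  have hc : 0 < √b := sqrt_pos.2 hb
  have hx : s / √b ∈ Set.Ioi 1 := (one_lt_div hc).2 hs
  refine (((hasDerivAt_arcosh hx).comp s ((hasDerivAt_id s).div_const √b)).const_mul
    √b).congr_deriv ?_
  have hsq : (s / √b) ^ 2 - 1 = (s ^ 2 - b) / b := by
    rw [div_pow, sq_sqrt hb.le, div_sub_one hb.ne']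
  rw [hsq, ← sqrt_inv, inv_div]
  field_simp

theorem integral_sqrt_div_sq_sub {b r : ℝ} (hb : 0 < b) (hr : √b ≤ r) :
    ∫ s in √b..r, √(b / (s ^ 2 - b)) = √b * arcosh (r / √b) := by
  have hc : 0 < √b := sqrt_pos.2 hb
  have hcont : ContinuousOn (fun t => √b * arcosh (t / √b)) (Set.Icc √b r) := by
    refine continuousOn_const.mul (continuousOn_arcosh.comp (by fun_prop) fun t ht => ?_)
    exact (one_le_div hc).2 ht.1
  have hderiv : ∀ s ∈ Set.Ioo √b r,
      HasDerivAt (fun t => √b * arcosh (t / √b)) (√(b / (s ^ 2 - b))) s :=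
    fun s hs => hasDerivAt_sqrt_mul_arcosh_div hb hs.1
  have hint : IntervalIntegrable (fun s => √(b / (s ^ 2 - b))) volume √b r :=
    (intervalIntegrable_iff_integrableOn_Ioc_of_le hr).2
      (intervalIntegral.integrableOn_deriv_of_nonneg hcont hderiv fun _ _ => sqrt_nonneg _)
  rw [intervalIntegral.integral_eq_sub_of_hasDerivAt_of_le hr hcont hderiv hint, div_self hc.ne',
    arcosh_zero, mul_zero, sub_zero]

theorem abs_arcosh_sub_log_two_mul_le {x : ℝ} (hx : 1 ≤ x) :
    |arcosh x - log (2 * x)| ≤ (x ^ 2)⁻¹ := by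
  set w := √(x ^ 2 - 1)
  have hw0 : 0 ≤ w := sqrt_nonneg _
  have hw2 : w ^ 2 = x ^ 2 - 1 := sq_sqrt (by nlinarith)
  have hwx : w ≤ x := by nlinarith
  have hxw : 0 < x + w := by linarith
  have hratio : 2 * x / (x + w) - 1 = ((x + w) ^ 2)⁻¹ := by
    field_simp
    nlinarith
  have hlog : log (2 * x) - arcosh x = log (2 * x / (x + w)) :=
    (log_div (by positivity) hxw.ne').symm
  rw [abs_sub_comm, abs_of_nonneg, hlog]
  · calc log (2 * x / (x + w)) ≤ 2 * x / (x + w) - 1 := log_le_sub_one_of_pos (by positivity)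
      _ = ((x + w) ^ 2)⁻¹ := hratio
      _ ≤ (x ^ 2)⁻¹ := by gcongr; linarith
  · rw [hlog]
    exact log_nonneg ((one_le_div hxw).2 (by linarith))

theorem arcosh_sub_log_two_mul_isBigO :
    (fun x => arcosh x - log (2 * x)) =O[atTop] fun x => x ^ (-2 : ℝ) := by
  refine IsBigO.of_bound 1 ?_
  filter_upwards [eventually_ge_atTop 1] with x hx
  rw [norm_eq_abs, norm_of_nonneg (rpow_nonneg (by linarith) _), one_mul, rpow_neg (by linarith),
    rpow_two]
  exact abs_arcosh_sub_log_two_mul_le hx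

end Real

theorem div_const_rpow_isBigO {c : ℝ} (hc : 0 ≤ c) (z : ℝ) :
    (fun r : ℝ => (r / c) ^ z) =O[atTop] fun r => r ^ z := by
  refine ((isBigO_refl (fun r : ℝ => r ^ z) atTop).const_mul_left (c ^ z)⁻¹).congr' ?_ .rfl
  filter_upwards [eventually_ge_atTop 0] with r hr
  rw [Real.div_rpow hr hc, div_eq_inv_mul]

/-- For `n = 4` and `m > 0`, with `r_m = √(2m)`, the Schwarzschild profile
`u_m(r) = ∫_{r_m}^r √(2m/(s² − 2m)) ds` satisfies
`u_m(r) = √(2m)·log r + a₁ + O(r^{−2})` as `r → ∞`, for some constant `a₁`,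
with leading coefficient `a = √(2m) ≠ 0`. -/
theorem schwarzschild_profile_four (m : ℝ) (hm : 0 < m) :
    let rm : ℝ := Real.sqrt (2 * m)
    let u : ℝ → ℝ := fun r => ∫ s in rm..r, Real.sqrt (2 * m / (s ^ 2 - 2 * m))
    Real.sqrt (2 * m) ≠ 0 ∧
    ∃ a₁ : ℝ,
      (fun r : ℝ => u r - (Real.sqrt (2 * m) * Real.log r + a₁)) =O[atTop]
        (fun r : ℝ => r ^ (-(2 : ℝ))) := by
  intro rm u
  have hb : 0 < 2 * m := by positivity
  have hrm : 0 < rm := Real.sqrt_pos.2 hb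
  refine ⟨hrm.ne', rm * Real.log (2 / rm), ?_⟩
  have hdiff : ∀ᶠ r in atTop, rm * (Real.arcosh (r / rm) - Real.log (2 * (r / rm))) =
      u r - (rm * Real.log r + rm * Real.log (2 / rm)) := by
    filter_upwards [eventually_ge_atTop rm] with r hr
    have hr0 : r ≠ 0 := (hrm.trans_le hr).ne'
    have hu : u r = rm * Real.arcosh (r / rm) := Real.integral_sqrt_div_sq_sub hb hr
    rw [hu, mul_div_left_comm, Real.log_mul hr0 (by positivity)]
    ring
  have hscaled : (fun r => Real.arcosh (r / rm) - Real.log (2 * (r / rm))) =O[atTop]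
      fun r => r ^ (-2 : ℝ) :=
    (Real.arcosh_sub_log_two_mul_isBigO.comp_tendsto (tendsto_id.atTop_div_const hrm)).trans
      (div_const_rpow_isBigO hrm.le _)
  exact (hscaled.const_mul_left rm).congr' hdiff .rfl
end

section
/- For n ≥ 3 and a symmetric n×n matrix A with S₂(A) = 0, letting G(A) = (tr A)I − A, the conditions (i) S₃(A) ≠ 0, (ii) rank A ≥ 2, and (iii) G(A) definite, are pairwise equivalent. -/
open Finset

variable {n : ℕ}

lemma split3 (i j : Fin n) (v : ℝ) :
    v = ((if i < j then v else 0) + (if j < i then v else 0)) + (if i = j then v else 0) := by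
  rcases lt_trichotomy i j with h | h | h
  · rw [if_pos h, if_neg (show ¬ j < i by omega), if_neg (show ¬ i = j by omega)]; ring
  · rw [if_neg (show ¬ i < j by omega), if_neg (show ¬ j < i by omega), if_pos h]; ring
  · rw [if_neg (show ¬ i < j by omega), if_pos h, if_neg (show ¬ i = j by omega)]; ring

lemma esym2_eq (f : Fin n → ℝ) : esym2 f = ∑ i, ∑ j, if i < j then f i * f j else 0 := by
  simp [esym2, sum_filter]

lemma esym3_eq (f : Fin n → ℝ) :
    esym3 f = ∑ i, ∑ j, ∑ k, if i < j ∧ j < k then f i * f j * f k else 0 := by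
  simp only [esym3, sum_filter]
  refine sum_congr rfl fun i _ => sum_congr rfl fun j _ => ?_
  by_cases h : i < j <;> simp [h]

lemma sum3_swap23 (g : Fin n → Fin n → Fin n → ℝ) :
    (∑ i, ∑ j, ∑ k, g i j k) = ∑ i, ∑ j, ∑ k, g i k j :=
  Finset.sum_congr rfl fun i _ => Finset.sum_comm

lemma sum3_cyc (g : Fin n → Fin n → Fin n → ℝ) :
    (∑ i, ∑ j, ∑ k, g i j k) = ∑ i, ∑ j, ∑ k, g k i j := by
  rw [Finset.sum_comm]
  exact Finset.sum_congr rfl fun j _ => Finset.sum_comm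

lemma offdiag_split (g : Fin n → Fin n → ℝ) :
    (∑ i, ∑ j, g i j) =
      ((∑ i, ∑ j, if i < j then g i j else 0) + (∑ i, ∑ j, if j < i then g i j else 0))
        + (∑ i, g i i) := by
  have : ∀ i : Fin n, ∑ j, (if i = j then g i j else 0) = g i i := by
    intro i; simp
  calc (∑ i, ∑ j, g i j)
      = ∑ i, ∑ j, (((if i < j then g i j else 0) + (if j < i then g i j else 0))
          + (if i = j then g i j else 0)) := by
        refine sum_congr rfl fun i _ => sum_congr rfl fun j _ => split3 i j _
    _ = _ := by
        simp only [sum_add_distrib]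
        rw [sum_congr rfl fun i _ => this i]

lemma sq_sum_eq (f : Fin n → ℝ) :
    (∑ i, f i) ^ 2 = (∑ i, f i ^ 2) + 2 * esym2 f := by
  have h1 : (∑ i, f i) ^ 2 = ∑ i, ∑ j, f i * f j := by
    rw [sq, Finset.sum_mul_sum]
  have h2 : (∑ i, ∑ j, if (j : Fin n) < i then f i * f j else 0) = esym2 f := by
    rw [Finset.sum_comm, esym2_eq]
    refine sum_congr rfl fun j _ => sum_congr rfl fun i _ => ?_
    rw [mul_comm]
  rw [h1, offdiag_split (fun i j => f i * f j), h2, esym2_eq]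
  simp only [← sq]
  ring

lemma cube_identity (f : Fin n → ℝ) :
    esym2 f * (∑ i, f i) =
      3 * esym3 f + ((∑ i, f i ^ 2) * (∑ i, f i) - ∑ i, f i ^ 3) := by
  have hL : esym2 f * (∑ k, f k) = ∑ i, ∑ j, ∑ k, if i < j then f i * f j * f k else 0 := by
    rw [esym2_eq, Finset.sum_mul]
    refine sum_congr rfl fun i _ => ?_
    rw [Finset.sum_mul]
    refine sum_congr rfl fun j _ => ?_
    by_cases h : i < j <;> simp [h, Finset.mul_sum]
  have key : ∀ i j k : Fin n, (if i < j then f i * f j * f k else 0) =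
      ((if i < j ∧ j < k then f i * f j * f k else 0)
        + (if i < k ∧ k < j then f i * f j * f k else 0)
        + (if k < i ∧ i < j then f i * f j * f k else 0))
      + ((if i < j ∧ k = i then f i * f j * f k else 0)
        + (if i < j ∧ k = j then f i * f j * f k else 0)) := by
    intro i j k
    split_ifs <;> (first | ring1 | (exfalso; omega))
  have hS1 : (∑ i, ∑ j, ∑ k, if i < j ∧ j < k then f i * f j * f k else 0) = esym3 f :=
    (esym3_eq f).symm
  have hS2 : (∑ i, ∑ j, ∑ k, if i < k ∧ k < j then f i * f j * f k else 0) = esym3 f := by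
    rw [sum3_swap23 (fun i j k => if i < k ∧ k < j then f i * f j * f k else 0), esym3_eq]
    refine sum_congr rfl fun i _ => sum_congr rfl fun j _ => sum_congr rfl fun k _ => ?_
    by_cases h : i < j ∧ j < k
    · rw [if_pos h, if_pos h]; ring
    · rw [if_neg h, if_neg h]
  have hS3 : (∑ i, ∑ j, ∑ k, if k < i ∧ i < j then f i * f j * f k else 0) = esym3 f := by
    rw [← sum3_cyc (fun i j k => if i < j ∧ j < k then f j * f k * f i else 0), esym3_eq]
    refine sum_congr rfl fun i _ => sum_congr rfl fun j _ => sum_congr rfl fun k _ => ?_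
    by_cases h : i < j ∧ j < k
    · rw [if_pos h, if_pos h]; ring
    · rw [if_neg h, if_neg h]
  have hS4 : (∑ i, ∑ j, ∑ k, if i < j ∧ k = i then f i * f j * f k else 0)
      = ∑ i, ∑ j, if i < j then f i ^ 2 * f j else 0 := by
    refine sum_congr rfl fun i _ => sum_congr rfl fun j _ => ?_
    by_cases h : i < j
    · simp only [h, true_and, Finset.sum_ite_eq', mem_univ, if_true]; ring
    · simp [h]
  have hS5 : (∑ i, ∑ j, ∑ k, if i < j ∧ k = j then f i * f j * f k else 0)
      = ∑ i, ∑ j, if i < j then f i * f j ^ 2 else 0 := by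
    refine sum_congr rfl fun i _ => sum_congr rfl fun j _ => ?_
    by_cases h : i < j
    · simp only [h, true_and, Finset.sum_ite_eq', mem_univ, if_true]; ring
    · simp [h]
  have hswap : (∑ i, ∑ j, if i < j then f i * f j ^ 2 else 0)
      = ∑ i, ∑ j, if j < i then f i ^ 2 * f j else 0 := by
    rw [Finset.sum_comm]
    refine sum_congr rfl fun j _ => sum_congr rfl fun i _ => ?_
    by_cases h : i < j
    · rw [if_pos h, if_pos h]; ring
    · rw [if_neg h, if_neg h]
  have hD : (∑ i, ∑ j, if i < j then f i ^ 2 * f j else 0)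
      + (∑ i, ∑ j, if i < j then f i * f j ^ 2 else 0)
      = (∑ i, f i ^ 2) * (∑ i, f i) - ∑ i, f i ^ 3 := by
    rw [hswap]
    have := offdiag_split (fun i j => f i ^ 2 * f j)
    rw [Finset.sum_mul_sum]
    have hdiag : ∀ i : Fin n, f i ^ 2 * f i = f i ^ 3 := fun i => by ring
    simp only [hdiag] at this
    linarith [this]
  calc esym2 f * (∑ i, f i)
      = ∑ i, ∑ j, ∑ k, if i < j then f i * f j * f k else 0 := hL
    _ = (∑ i, ∑ j, ∑ k, (((if i < j ∧ j < k then f i * f j * f k else 0)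
          + (if i < k ∧ k < j then f i * f j * f k else 0)
          + (if k < i ∧ i < j then f i * f j * f k else 0))
        + ((if i < j ∧ k = i then f i * f j * f k else 0)
          + (if i < j ∧ k = j then f i * f j * f k else 0)))) := by
        exact sum_congr rfl fun i _ => sum_congr rfl fun j _ => sum_congr rfl fun k _ => key i j k
    _ = 3 * esym3 f + ((∑ i, f i ^ 2) * (∑ i, f i) - ∑ i, f i ^ 3) := by
        simp only [sum_add_distrib]
        rw [hS1, hS2, hS3, hS4, hS5, ← hD]
        ring

lemma esym3_zero_of_subsingleton (f : Fin n → ℝ)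
    (h : ∀ a b : Fin n, f a ≠ 0 → f b ≠ 0 → a = b) : esym3 f = 0 := by
  refine Finset.sum_eq_zero fun i _ => Finset.sum_eq_zero fun j hj => Finset.sum_eq_zero fun k hk => ?_
  rw [mem_filter] at hj
  by_cases hfi : f i = 0
  · rw [hfi]; ring
  by_cases hfj : f j = 0
  · rw [hfj]; ring
  exact absurd (h i j hfi hfj) (by omega)

lemma sum_eq_single_of_unique (f : Fin n → ℝ) (a : Fin n)
    (h : ∀ b : Fin n, b ≠ a → f b = 0) : (∑ i, f i) = f a :=
  Finset.sum_eq_single_of_mem a (mem_univ a) (fun b _ hb => h b hb)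

/-- Core scalar lemma: with `esym2 f = 0` and two distinct nonzero values,
every value is strictly between `-|s|` and `|s|` where `s = ∑ f`. -/
lemma core_sq_lt (f : Fin n → ℝ) (h2 : esym2 f = 0)
    {a b : Fin n} (hab : a ≠ b) (ha : f a ≠ 0) (hb : f b ≠ 0) (i : Fin n) :
    f i ^ 2 < (∑ j, f j) ^ 2 := by
  have hp2 : (∑ j, f j) ^ 2 = ∑ j, f j ^ 2 := by
    rw [sq_sum_eq, h2]; ring
  rw [hp2]
  obtain ⟨c, hci, hc⟩ : ∃ c, c ≠ i ∧ f c ≠ 0 := by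
    by_cases h : a = i
    · exact ⟨b, by omega, hb⟩
    · exact ⟨a, h, ha⟩
  have hsub : f i ^ 2 + f c ^ 2 ≤ ∑ j, f j ^ 2 := by
    have : ({i, c} : Finset (Fin n)) ⊆ univ := subset_univ _
    calc f i ^ 2 + f c ^ 2 = ∑ j ∈ ({i, c} : Finset (Fin n)), f j ^ 2 := by
          rw [Finset.sum_pair (by omega : i ≠ c)]
      _ ≤ ∑ j, f j ^ 2 :=
          Finset.sum_le_sum_of_subset_of_nonneg this (fun j _ _ => sq_nonneg _)
  nlinarith [sq_nonneg (f c), hc, sq_pos_of_ne_zero hc]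

lemma core_esym3_ne (f : Fin n → ℝ) (h2 : esym2 f = 0)
    {a b : Fin n} (hab : a ≠ b) (ha : f a ≠ 0) (hb : f b ≠ 0) :
    esym3 f ≠ 0 := by
  have hcube := cube_identity f
  rw [h2, zero_mul] at hcube
  have h3 : 3 * esym3 f = -∑ i, f i ^ 2 * ((∑ j, f j) - f i) := by
    have hh : (∑ i, f i ^ 2 * ((∑ j, f j) - f i))
        = (∑ i, f i ^ 2) * (∑ j, f j) - ∑ i, f i ^ 3 := by
      calc (∑ i, f i ^ 2 * ((∑ j, f j) - f i))
          = ∑ i, (f i ^ 2 * (∑ j, f j) - f i ^ 3) :=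
            Finset.sum_congr rfl fun i _ => by ring
        _ = (∑ i, f i ^ 2 * (∑ j, f j)) - ∑ i, f i ^ 3 := Finset.sum_sub_distrib _ _
        _ = (∑ i, f i ^ 2) * (∑ j, f j) - ∑ i, f i ^ 3 := by rw [← Finset.sum_mul]
    rw [hh]; linarith [hcube]
  have hlt : ∀ i, f i ^ 2 < (∑ j, f j) ^ 2 := core_sq_lt f h2 hab ha hb
  have hane : f a ^ 2 > 0 := sq_pos_of_ne_zero ha
  have hs : (∑ j, f j) ≠ 0 := by
    intro h0
    have := hlt a; rw [h0] at this; nlinarith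
  rcases lt_or_gt_of_ne hs with hneg | hpos
  · have hgt : ∀ i, (∑ j, f j) < f i := by
      intro i
      nlinarith [hlt i, sq_nonneg (f i - ∑ j, f j)]
    have hterm : ∀ i, f i ^ 2 * ((∑ j, f j) - f i) ≤ 0 := by
      intro i; nlinarith [sq_nonneg (f i), hgt i]
    have hterma : f a ^ 2 * ((∑ j, f j) - f a) < 0 := by
      nlinarith [hgt a]
    have hsum : 0 < ∑ i, -(f i ^ 2 * ((∑ j, f j) - f i)) :=
      Finset.sum_pos' (fun i _ => by linarith [hterm i]) ⟨a, mem_univ a, by linarith⟩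
    rw [Finset.sum_neg_distrib] at hsum
    intro h0; rw [h0, mul_zero] at h3; linarith
  · have hgt : ∀ i, f i < (∑ j, f j) := by
      intro i
      nlinarith [hlt i, sq_nonneg (f i + ∑ j, f j)]
    have hterm : ∀ i, 0 ≤ f i ^ 2 * ((∑ j, f j) - f i) := by
      intro i; nlinarith [sq_nonneg (f i), hgt i]
    have hterma : 0 < f a ^ 2 * ((∑ j, f j) - f a) := by
      nlinarith [hgt a]
    have hsum : 0 < ∑ i, f i ^ 2 * ((∑ j, f j) - f i) :=
      Finset.sum_pos' (fun i _ => hterm i) ⟨a, mem_univ a, hterma⟩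
    intro h0; rw [h0, mul_zero] at h3; linarith

/-! ### Matrix side -/

open Matrix

lemma posDef_conj {U M : Matrix (Fin n) (Fin n) ℝ}
    (hU : U ∈ Matrix.unitaryGroup (Fin n) ℝ) (hM : M.PosDef) :
    (U * M * star U).PosDef := by
  refine Matrix.PosDef.of_dotProduct_mulVec_pos ?_ ?_
  · have := Matrix.isHermitian_mul_mul_conjTranspose U hM.1
    rwa [Matrix.star_eq_conjTranspose]
  · intro x hx
    have hUx : star U *ᵥ x ≠ 0 := by
      intro h0
      apply hx
      have hxx : U *ᵥ (star U *ᵥ x) = x := by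
        rw [Matrix.mulVec_mulVec, Matrix.mem_unitaryGroup_iff.mp hU, Matrix.one_mulVec]
      rw [← hxx, h0, Matrix.mulVec_zero]
    have hq : dotProduct (star x) ((U * M * star U) *ᵥ x)
        = dotProduct (star (star U *ᵥ x)) (M *ᵥ (star U *ᵥ x)) := by
      rw [← Matrix.mulVec_mulVec, ← Matrix.mulVec_mulVec, Matrix.dotProduct_mulVec,
        Matrix.star_mulVec, Matrix.star_eq_conjTranspose, Matrix.conjTranspose_conjTranspose]
    rw [hq]
    exact hM.dotProduct_mulVec_pos hUx

lemma posDef_conj_iff {U M : Matrix (Fin n) (Fin n) ℝ}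
    (hU : U ∈ Matrix.unitaryGroup (Fin n) ℝ) :
    (U * M * star U).PosDef ↔ M.PosDef := by
  refine ⟨fun h => ?_, posDef_conj hU⟩
  have hU' : star U ∈ Matrix.unitaryGroup (Fin n) ℝ := Unitary.star_mem hU
  have := posDef_conj hU' h
  have heq : star U * (U * M * star U) * star (star U) = M := by
    rw [star_star]
    calc star U * (U * M * star U) * U = (star U * U) * M * (star U * U) := by
          simp only [Matrix.mul_assoc]
      _ = M := by rw [Matrix.mem_unitaryGroup_iff'.mp hU]; simp
  rwa [heq] at this

lemma spectral_real {A : Matrix (Fin n) (Fin n) ℝ} (hA : A.IsHermitian) :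
    A = (hA.eigenvectorUnitary : Matrix (Fin n) (Fin n) ℝ) * diagonal hA.eigenvalues
      * star (hA.eigenvectorUnitary : Matrix (Fin n) (Fin n) ℝ) := by
  have h := hA.spectral_theorem
  rwa [RCLike.ofReal_real_eq_id, Function.id_comp] at h

lemma smul_one_decomp {A : Matrix (Fin n) (Fin n) ℝ} (hA : A.IsHermitian) (c : ℝ) :
    c • (1 : Matrix (Fin n) (Fin n) ℝ)
      = (hA.eigenvectorUnitary : Matrix (Fin n) (Fin n) ℝ) * diagonal (fun _ => c)
        * star (hA.eigenvectorUnitary : Matrix (Fin n) (Fin n) ℝ) := by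
  rw [← Matrix.smul_one_eq_diagonal, Matrix.mul_smul, mul_one, Matrix.smul_mul,
    Matrix.mem_unitaryGroup_iff.mp hA.eigenvectorUnitary.2]

lemma newton1_decomp {A : Matrix (Fin n) (Fin n) ℝ} (hA : A.IsHermitian) :
    newton1 A = (hA.eigenvectorUnitary : Matrix (Fin n) (Fin n) ℝ)
      * diagonal (fun i => A.trace - hA.eigenvalues i)
      * star (hA.eigenvectorUnitary : Matrix (Fin n) (Fin n) ℝ) := by
  have h1 := smul_one_decomp hA A.trace
  have h2 := spectral_real hA
  calc newton1 A = A.trace • (1 : Matrix (Fin n) (Fin n) ℝ) - A := rfl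
    _ = (hA.eigenvectorUnitary : Matrix (Fin n) (Fin n) ℝ)
        * (diagonal (fun _ => A.trace) - diagonal hA.eigenvalues)
        * star (hA.eigenvectorUnitary : Matrix (Fin n) (Fin n) ℝ) := by
      rw [Matrix.mul_sub, Matrix.sub_mul, ← h1, ← h2]
    _ = _ := by rw [Matrix.diagonal_sub]

lemma neg_newton1_decomp {A : Matrix (Fin n) (Fin n) ℝ} (hA : A.IsHermitian) :
    -newton1 A = (hA.eigenvectorUnitary : Matrix (Fin n) (Fin n) ℝ)
      * diagonal (fun i => hA.eigenvalues i - A.trace)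
      * star (hA.eigenvectorUnitary : Matrix (Fin n) (Fin n) ℝ) := by
  have hd : -(diagonal fun i => A.trace - hA.eigenvalues i)
      = diagonal (fun i => hA.eigenvalues i - A.trace) := by
    rw [Matrix.diagonal_neg]; simp [neg_sub]
  rw [newton1_decomp hA, ← Matrix.neg_mul, ← Matrix.mul_neg, hd]

lemma trace_eq_sum_eigs {A : Matrix (Fin n) (Fin n) ℝ} (hA : A.IsHermitian) :
    A.trace = ∑ i, hA.eigenvalues i := by
  conv_lhs => rw [spectral_real hA]
  rw [Matrix.trace_mul_cycle, Matrix.mem_unitaryGroup_iff'.mp hA.eigenvectorUnitary.2,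
    one_mul, Matrix.trace_diagonal]

/-- For `n ≥ 3` and a real symmetric `n×n` matrix `A` with `S₂(A) = 0`, the
conditions (i) `S₃(A) ≠ 0`, (ii) `rank A ≥ 2`, and (iii) `G(A)` is (positive
or negative) definite, are pairwise equivalent. -/
theorem ellipticity_conditions_equivalent {n : ℕ} (hn : 3 ≤ n)
    (A : Matrix (Fin n) (Fin n) ℝ) (hA : A.IsHermitian)
    (hS2 : esym2 hA.eigenvalues = 0) :
    (esym3 hA.eigenvalues ≠ 0 ↔ 2 ≤ A.rank) ∧
    (2 ≤ A.rank ↔ ((newton1 A).PosDef ∨ (-(newton1 A)).PosDef)) ∧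
    (((newton1 A).PosDef ∨ (-(newton1 A)).PosDef) ↔ esym3 hA.eigenvalues ≠ 0) := by
  set f := hA.eigenvalues with hf
  have htr : A.trace = ∑ i, f i := trace_eq_sum_eigs hA
  have hU := hA.eigenvectorUnitary.2
  have hGpos : (newton1 A).PosDef ↔ ∀ i, f i < A.trace := by
    rw [newton1_decomp hA, posDef_conj_iff hU, Matrix.posDef_diagonal_iff]
    simp [sub_pos]
    exact Iff.rfl
  have hGneg : (-(newton1 A)).PosDef ↔ ∀ i, A.trace < f i := by
    rw [neg_newton1_decomp hA, posDef_conj_iff hU, Matrix.posDef_diagonal_iff]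
    simp [sub_pos]
    exact Iff.rfl
  have hrank : 2 ≤ A.rank ↔ ∃ a b : Fin n, a ≠ b ∧ f a ≠ 0 ∧ f b ≠ 0 := by
    rw [hA.rank_eq_card_non_zero_eigs, ← hf]
    constructor
    · intro h
      obtain ⟨a, b, hab⟩ := Fintype.one_lt_card_iff.mp (show 1 < Fintype.card {i // f i ≠ 0} by omega)
      exact ⟨a.1, b.1, fun h' => hab (Subtype.ext h'), a.2, b.2⟩
    · rintro ⟨a, b, hab, ha, hb⟩
      have : 1 < Fintype.card {i // f i ≠ 0} :=
        Fintype.one_lt_card_iff.mpr ⟨⟨a, ha⟩, ⟨b, hb⟩, fun h => hab (congrArg Subtype.val h)⟩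
      omega
  have h21 : 2 ≤ A.rank → esym3 f ≠ 0 := by
    intro h; obtain ⟨a, b, hab, ha, hb⟩ := hrank.mp h
    exact core_esym3_ne f hS2 hab ha hb
  have h12 : esym3 f ≠ 0 → 2 ≤ A.rank := by
    intro h; by_contra hc
    apply h
    apply esym3_zero_of_subsingleton
    intro a b ha hb
    by_contra hab
    exact hc (hrank.mpr ⟨a, b, hab, ha, hb⟩)
  have h23 : 2 ≤ A.rank → ((newton1 A).PosDef ∨ (-(newton1 A)).PosDef) := by
    intro h
    obtain ⟨a, b, hab, ha, hb⟩ := hrank.mp h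
    have hlt := core_sq_lt f hS2 hab ha hb
    have hs : (∑ j, f j) ≠ 0 := by
      intro h0; have := hlt a; rw [h0] at this
      nlinarith [sq_pos_of_ne_zero ha]
    rcases lt_or_gt_of_ne hs with hneg | hpos
    · right; rw [hGneg, htr]
      intro i; nlinarith [hlt i, sq_nonneg (f i - ∑ j, f j)]
    · left; rw [hGpos, htr]
      intro i; nlinarith [hlt i, sq_nonneg (f i + ∑ j, f j)]
  have h32 : ((newton1 A).PosDef ∨ (-(newton1 A)).PosDef) → 2 ≤ A.rank := by
    intro h
    by_contra hc
    have huniq : ∀ a b : Fin n, f a ≠ 0 → f b ≠ 0 → a = b := by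
      intro a b ha hb; by_contra hab; exact hc (hrank.mpr ⟨a, b, hab, ha, hb⟩)
    by_cases hall : ∀ i, f i = 0
    · have hsum0 : (∑ j : Fin n, f j) = 0 := Finset.sum_eq_zero fun i _ => hall i
      have i0 : Fin n := ⟨0, by omega⟩
      rcases h with h | h
      · have := hGpos.mp h i0; rw [htr, hsum0, hall i0] at this; exact lt_irrefl _ this
      · have := hGneg.mp h i0; rw [htr, hsum0, hall i0] at this; exact lt_irrefl _ this
    · push_neg at hall; obtain ⟨a, ha⟩ := hall
      have hsum : (∑ j, f j) = f a := sum_eq_single_of_unique f a (fun b hb => by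
        by_contra hfb; exact hb (huniq b a hfb ha))
      rcases h with h | h
      · have := hGpos.mp h a; rw [htr, hsum] at this; exact lt_irrefl _ this
      · have := hGneg.mp h a; rw [htr, hsum] at this; exact lt_irrefl _ this
  exact ⟨⟨h12, h21⟩, ⟨h23, h32⟩, ⟨fun h => h21 (h32 h), fun h => h23 (h12 h)⟩⟩
end
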